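/- In the five-state symmetric protocol of Algorithm 3 (states r^ω₀, r^ω₁, b^ω, r, b), in any configuration reachable from the all-r^ω₀ configuration, the equation #r = #b + 2·#b^ω holds. -/

import Mathlib

/-- States of the five-state symmetric protocol: r^ω₀, r^ω₁, b^ω, r, b. -/
inductive St : Type
  | rw0 | rw1 | bw | r | b
deriving DecidableEq

/-- Deterministic transition function of Algorithm 3 (with symmetric variants). -/
def delta : St → St → St × St
  | .rw0, .rw0 => (.rw1, .rw1)
  | .rw1, .rw1 => (.rw0, .rw0)
  | .rw0, .rw1 => (.r, .b)
  | .rw1, .rw0 => (.b, .r)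
  | .rw0, .r   => (.r, .rw0)
  | .r,  .rw0  => (.rw0, .r)
  | .rw1, .r   => (.r, .rw0)
  | .r,  .rw1  => (.rw0, .r)
  | .bw, .b    => (.b, .bw)
  | .b,  .bw   => (.bw, .b)
  | .rw0, .b   => (.r, .bw)
  | .b,  .rw0  => (.bw, .r)
  | .rw1, .b   => (.r, .bw)
  | .b,  .rw1  => (.bw, .r)
  | .bw, .r    => (.b, .rw0)
  | .r,  .bw   => (.rw0, .b)
  | .rw0, .bw  => (.b, .b)
  | .bw, .rw0  => (.b, .b)
  | .rw1, .bw  => (.b, .b)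
  | .bw, .rw1  => (.b, .b)
  | p, q       => (p, q)

/-- One step: apply the rule to an ordered pair of distinct agents. -/
def Step {n : ℕ} (C C' : Fin n → St) : Prop :=
  ∃ i j : Fin n, i ≠ j ∧
    C' = Function.update (Function.update C i (delta (C i) (C j)).1) j
          (delta (C i) (C j)).2

/-- Number of agents in state `s`. -/
def cnt {n : ℕ} (C : Fin n → St) (s : St) : ℕ :=
  (Finset.univ.filter fun a => C a = s).card

/-- Number of token-holding agents (state r^ω₀, r^ω₁ or b^ω). -/
def tokens {n : ℕ} (C : Fin n → St) : ℕ := cnt C .rw0 + cnt C .rw1 + cnt C .bw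

/-- Number of red agents (state r^ω₀, r^ω₁ or r). -/
def reds {n : ℕ} (C : Fin n → St) : ℕ := cnt C .rw0 + cnt C .rw1 + cnt C .r

/-- Number of blue agents (state b^ω or b). -/
def blues {n : ℕ} (C : Fin n → St) : ℕ := cnt C .bw + cnt C .b

/-!
The quantity `#r - #b - 2·#b^ω` is the sum over the agents of the charge
`r ↦ 1`, `b ↦ -1`, `b^ω ↦ -2`, `r^ω₀, r^ω₁ ↦ 0`. Every transition preserves the total charge of the
two interacting agents, so the sum is invariant along executions, and it is `0` initially.
-/

open Finset

theorem Fintype.sum_update_add {ι M : Type*} [Fintype ι] [DecidableEq ι] [AddCommMonoid M]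
    (f : ι → M) (i : ι) (b : M) : ∑ a, Function.update f i b a + f i = ∑ a, f a + b := by
  rw [sum_update_of_mem (mem_univ i), sdiff_singleton_eq_erase, add_assoc,
    sum_erase_add _ _ (mem_univ i), add_comm]

section Invariant

variable {M : Type*} [AddCancelCommMonoid M] {φ : St → M}

theorem sum_comp_eq_of_step
    (hφ : ∀ p q, φ (delta p q).1 + φ (delta p q).2 = φ p + φ q)
    {n : ℕ} {C C' : Fin n → St} (h : Step C C') : ∑ a, φ (C' a) = ∑ a, φ (C a) := by
  obtain ⟨i, j, hij, rfl⟩ := h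
  set C₁ := Function.update C i (delta (C i) (C j)).1
  have hC₁j : C₁ j = C j := Function.update_of_ne hij.symm _ _
  have h₂ := Fintype.sum_update_add (φ ∘ C₁) j (φ (delta (C i) (C j)).2)
  have h₁ := Fintype.sum_update_add (φ ∘ C) i (φ (delta (C i) (C j)).1)
  simp only [← Function.comp_update, Function.comp_apply, hC₁j] at h₁ h₂
  apply add_right_cancel (b := φ (C j) + φ (C i))
  rw [← add_assoc, h₂, add_right_comm, h₁, add_assoc, hφ, add_comm (φ (C i))]

theorem sum_comp_eq_of_reflTransGen
    (hφ : ∀ p q, φ (delta p q).1 + φ (delta p q).2 = φ p + φ q)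
    {n : ℕ} {C C' : Fin n → St} (h : Relation.ReflTransGen Step C C') :
    ∑ a, φ (C' a) = ∑ a, φ (C a) := by
  induction h with
  | refl => rfl
  | tail _ hstep ih => rw [sum_comp_eq_of_step hφ hstep, ih]

end Invariant

def charge : St → ℤ
  | .r => 1
  | .b => -1
  | .bw => -2
  | .rw0 | .rw1 => 0

theorem charge_delta (p q : St) :
    charge (delta p q).1 + charge (delta p q).2 = charge p + charge q := by
  cases p <;> cases q <;> rfl

theorem sum_charge {n : ℕ} (C : Fin n → St) :
    ∑ a, charge (C a) = (cnt C .r : ℤ) - cnt C .b - 2 * cnt C .bw := by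
  simp only [cnt, card_filter, Nat.cast_sum, Nat.cast_ite, Nat.cast_one, Nat.cast_zero,
    mul_sum, ← sum_sub_distrib]
  refine sum_congr rfl fun a _ => ?_
  cases C a <;> rfl

theorem stmt6 (n : ℕ) (C : Fin n → St)
    (h : Relation.ReflTransGen Step (fun _ => St.rw0) C) :
    cnt C .r = cnt C .b + 2 * cnt C .bw := by
  have hcharge := sum_comp_eq_of_reflTransGen charge_delta h
  rw [sum_charge] at hcharge
  simp only [charge, sum_const_zero] at hcharge
  omega
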